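/- Let t : C → A and t' : C' → A' be twisting cochains, f : A' → A a map of augmented dgas and g, g̃ : C' → C maps of coaugmented dgcs with t g = f t' and t g̃ = f t'. If h : C' → C is a coalgebra homotopy from g to g̃ with t ∘ h = 0, then h ⊗ f : C' ⊗_{t'} A' → C ⊗_t A is a chain homotopy from g ⊗ f to g̃ ⊗ f. -/

import Mathlib

/-!
STATEMENT 5: Given twisting cochains `t : C → A`, `t' : C' → A'`, a map of augmented
dgas `f : A' → A`, maps of coaugmented dgcs `g, gg : C' → C` with `t g = f t'` and
`t gg = f t'`, and a coalgebra homotopy `h` from `g` to `gg` with `t ∘ h = 0`, the map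
`h ⊗ f : C' ⊗_{t'} A' → C ⊗_t A` is a chain homotopy from `g ⊗ f` to `gg ⊗ f`.
A coalgebra homotopy has degree `-1`: its chain-homotopy property reads
`d h + h d = g - gg` and its coalgebra property `Δ h = (g ⊗ h - h ⊗ gg) Δ'` (the sign
reflecting the Koszul convention for the degree `-1` map `h` in the ungraded shadow
used here, which makes `δ_t (h ⊗ f) = -(h ⊗ f) δ_{t'}` when `t h = 0`).
The tensor-product differentials are encoded abstractly; the hypothesis
`d⊗ (h ⊗ f) + (h ⊗ f) d⊗' = (g - gg) ⊗ f` expresses that `h ⊗ f` is a chain homotopy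
for the untwisted differentials (using `d(f) = 0`).
-/

open TensorProduct

noncomputable section

/-- The data of a coaugmented differential graded coalgebra on `C`
(only the axioms that can be stated without reference to the grading are recorded). -/
structure DgcData (k C : Type) [CommRing k] [AddCommGroup C] [Module k C] where
  /-- the diagonal -/
  Δ : C →ₗ[k] C ⊗[k] C
  /-- the counit -/
  ε : C →ₗ[k] k
  /-- the coaugmentation -/
  η : k →ₗ[k] C
  /-- the differential -/
  d : C →ₗ[k] C
  coassoc : (TensorProduct.assoc k C C C).toLinearMap ∘ₗ (LinearMap.rTensor C Δ) ∘ₗ Δ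
      = (LinearMap.lTensor C Δ) ∘ₗ Δ
  counit_left : ∀ c : C, (LinearMap.rTensor C ε) (Δ c) = (1 : k) ⊗ₜ[k] c
  counit_right : ∀ c : C, (LinearMap.lTensor C ε) (Δ c) = c ⊗ₜ[k] (1 : k)
  ε_η : ε (η 1) = 1
  Δ_η : Δ (η 1) = η 1 ⊗ₜ[k] η 1
  d_sq : ∀ c, d (d c) = 0
  ε_d : ∀ c, ε (d c) = 0
  d_η : d (η 1) = 0

/-- The data of an augmented differential graded algebra on `A`
(only the axioms that can be stated without reference to the grading are recorded). -/
structure DgaData (k A : Type) [CommRing k] [Ring A] [Algebra k A] where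
  /-- the differential -/
  d : A →ₗ[k] A
  /-- the augmentation -/
  ε : A →ₗ[k] k
  d_sq : ∀ a, d (d a) = 0
  d_one : d 1 = 0
  ε_one : ε 1 = 1
  ε_mul : ∀ a b, ε (a * b) = ε a * ε b
  ε_d : ∀ a, ε (d a) = 0

variable {k C C' A A' : Type} [CommRing k] [AddCommGroup C] [Module k C]
  [AddCommGroup C'] [Module k C'] [Ring A] [Algebra k A] [Ring A'] [Algebra k A']

/-- The cup product `f ∪ g = μ_A (f ⊗ g) Δ_C` on `Hom(C, A)`. -/
def cup (Δ : C →ₗ[k] C ⊗[k] C) (f g : C →ₗ[k] A) : C →ₗ[k] A :=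
  (LinearMap.mul' k A) ∘ₗ (TensorProduct.map f g) ∘ₗ Δ

/-- The unit `η_A ε_C` of the cup-product algebra `Hom(C, A)`. -/
def unitHom (ε : C →ₗ[k] k) : C →ₗ[k] A := (Algebra.linearMap k A) ∘ₗ ε

/-- A twisting cochain: `d(t) = t ∪ t` (for `t` of degree `1` this reads
`d_A t + t d_C = t ∪ t`), with the normalizations `ε_A t = 0` and `t η_C = 0`. -/
def IsTwCochain (SC : DgcData k C) (SA : DgaData k A) (t : C →ₗ[k] A) : Prop :=
  SA.d ∘ₗ t + t ∘ₗ SC.d = cup SC.Δ t t ∧ SA.ε ∘ₗ t = 0 ∧ t (SC.η 1) = 0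

/-- `δ_f = (1_C ⊗ μ_A)(1_C ⊗ f ⊗ 1_A)(Δ_C ⊗ 1_A) : C ⊗ A → C ⊗ A`. -/
def deltaOp (Δ : C →ₗ[k] C ⊗[k] C) (f : C →ₗ[k] A) : C ⊗[k] A →ₗ[k] C ⊗[k] A :=
  (LinearMap.lTensor C (LinearMap.mul' k A)) ∘ₗ
  (LinearMap.lTensor C (LinearMap.rTensor A f)) ∘ₗ
  (TensorProduct.assoc k C C A).toLinearMap ∘ₗ
  (LinearMap.rTensor A Δ)

/-- A map of coaugmented dgcs `g : C' → C`. -/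
def IsDgcHom (SC' : DgcData k C') (SC : DgcData k C) (g : C' →ₗ[k] C) : Prop :=
  SC.Δ ∘ₗ g = (TensorProduct.map g g) ∘ₗ SC'.Δ ∧
  SC.ε ∘ₗ g = SC'.ε ∧ g (SC'.η 1) = SC.η 1 ∧ SC.d ∘ₗ g = g ∘ₗ SC'.d

/-- A map of augmented dgas `f : A' → A`. -/
def IsDgaHom (SA' : DgaData k A') (SA : DgaData k A) (f : A' →ₗ[k] A) : Prop :=
  f 1 = 1 ∧ (∀ a b, f (a * b) = f a * f b) ∧
  SA.d ∘ₗ f = f ∘ₗ SA'.d ∧ SA.ε ∘ₗ f = SA'.ε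

/-- If `h : C' → C` is a coalgebra homotopy from `g` to `gg` with
`t ∘ h = 0`, where `t g = f t' = t gg`, then `h ⊗ f` is a chain homotopy from
`g ⊗ f` to `gg ⊗ f` between the twisted tensor products `C' ⊗_{t'} A' → C ⊗_t A`. -/
theorem homotopy_tensor_of_coalgebra_homotopy
    (SC : DgcData k C) (SC' : DgcData k C') (SA : DgaData k A) (SA' : DgaData k A')
    (t : C →ₗ[k] A) (t' : C' →ₗ[k] A')
    (ht : IsTwCochain SC SA t) (ht' : IsTwCochain SC' SA' t')
    (f : A' →ₗ[k] A) (hf : IsDgaHom SA' SA f)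
    (g gg : C' →ₗ[k] C) (hg : IsDgcHom SC' SC g) (hgg : IsDgcHom SC' SC gg)
    (hgt : t ∘ₗ g = f ∘ₗ t') (hggt : t ∘ₗ gg = f ∘ₗ t')
    -- `h` is a coalgebra homotopy from `g` to `gg`
    (h : C' →ₗ[k] C)
    (hhom : SC.d ∘ₗ h + h ∘ₗ SC'.d = g - gg)
    (hΔ : SC.Δ ∘ₗ h = (TensorProduct.map g h - TensorProduct.map h gg) ∘ₗ SC'.Δ)
    (hε : SC.ε ∘ₗ h = 0) (hη : h (SC'.η 1) = 0)
    (hth : t ∘ₗ h = 0)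
    -- the tensor-product differentials, and the chain-homotopy property of `h ⊗ f`
    -- for the untwisted differentials
    (dT : C ⊗[k] A →ₗ[k] C ⊗[k] A) (dT' : C' ⊗[k] A' →ₗ[k] C' ⊗[k] A')
    (hdT_sq : dT ∘ₗ dT = 0) (hdT'_sq : dT' ∘ₗ dT' = 0)
    (hdTh : dT ∘ₗ TensorProduct.map h f + TensorProduct.map h f ∘ₗ dT'
      = TensorProduct.map (g - gg) f) :
    (dT - deltaOp SC.Δ t) ∘ₗ TensorProduct.map h f
      + TensorProduct.map h f ∘ₗ (dT' - deltaOp SC'.Δ t')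
      = TensorProduct.map g f - TensorProduct.map gg f := by
  obtain ⟨hf1, hfmul, hfd, hfε⟩ := hf
  have hmapsub : TensorProduct.map (g - gg) f
      = TensorProduct.map g f - TensorProduct.map gg f := by
    apply TensorProduct.ext'
    intro c a
    simp [TensorProduct.sub_tmul]
  have key : deltaOp SC.Δ t ∘ₗ TensorProduct.map h f
      = - (TensorProduct.map h f ∘ₗ deltaOp SC'.Δ t') := by
    apply TensorProduct.ext'
    intro c a
    have hΔc : SC.Δ (h c) = (TensorProduct.map g h - TensorProduct.map h gg) (SC'.Δ c) :=
      congrFun (congrArg DFunLike.coe hΔ) c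
    simp only [LinearMap.comp_apply, TensorProduct.map_tmul, LinearMap.neg_apply,
      deltaOp, LinearMap.rTensor_tmul, LinearEquiv.coe_coe, hΔc]
    induction SC'.Δ c using TensorProduct.induction_on with
    | zero => simp
    | tmul c1 c2 =>
        have h1 : t (h c2) = 0 := congrFun (congrArg DFunLike.coe hth) c2
        have h2 : t (gg c2) = f (t' c2) := congrFun (congrArg DFunLike.coe hggt) c2
        simp [TensorProduct.sub_tmul, LinearMap.mul'_apply, h1, h2, hfmul]
    | add x y hx hy =>
        simp only [map_add, TensorProduct.add_tmul] at *
        rw [hx, hy]; abel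
  calc (dT - deltaOp SC.Δ t) ∘ₗ TensorProduct.map h f
      + TensorProduct.map h f ∘ₗ (dT' - deltaOp SC'.Δ t')
      = (dT ∘ₗ TensorProduct.map h f + TensorProduct.map h f ∘ₗ dT')
        - (deltaOp SC.Δ t ∘ₗ TensorProduct.map h f
          + TensorProduct.map h f ∘ₗ deltaOp SC'.Δ t') := by
        simp only [LinearMap.sub_comp, LinearMap.comp_sub]; abel
    _ = TensorProduct.map g f - TensorProduct.map gg f := by
        rw [hdTh, key, hmapsub]; abel

end
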